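/- arXiv:2405.11670 — 4 statements merged into one kernel-verified Lean document; each statement's English description precedes it below -/
import Mathlib

section
/- In a multiplicative lattice L with 1 compact, an element x is a z-element if and only if x equals the meet of all maximal elements above x, i.e., x = ⋀{m maximal : x ≤ m}. -/
/-- A multiplicative lattice: a complete lattice with an associative, commutative
multiplication distributing over arbitrary joins, with the top element as unit. -/
class MultiplicativeLattice (L : Type*) extends CompleteLattice L, CommMonoid L where
  mul_sSup : ∀ (a : L) (s : Set L), a * sSup s = ⨆ b ∈ s, a * b
  one_eq_top : (1 : L) = ⊤

variable {L : Type*} [MultiplicativeLattice L]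

/-- A maximal element: proper, and anything properly above it up to (but not) ⊤ equals it. -/
def IsMaxElt (m : L) : Prop := m ≠ ⊤ ∧ ∀ x : L, m ≤ x → x ≠ ⊤ → m = x

/-- The set of maximal elements above `a`. -/
def MSet (a : L) : Set L := {m | IsMaxElt m ∧ a ≤ m}

/-- A z-element: `M_a ⊇ M_b` and `b ≤ x` imply `a ≤ x`. -/
def IsZ (x : L) : Prop := ∀ a b : L, MSet b ⊆ MSet a → b ≤ x → a ≤ x

/-- The top element 1 = ⊤ is compact. -/
def OneCompact (L : Type*) [MultiplicativeLattice L] : Prop :=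
  ∀ s : Set L, sSup s = ⊤ → ∃ t : Finset L, ↑t ⊆ s ∧ t.sup id = ⊤

/-- The z-closure of an element: meet of all z-elements above it. -/
noncomputable def zCl (a : L) : L := sInf {z : L | IsZ z ∧ a ≤ z}

theorem le_sInf_MSet (x : L) : x ≤ sInf (MSet x) :=
  le_sInf fun _ hm => hm.2

theorem MSet_sInf_MSet (x : L) : MSet (sInf (MSet x)) = MSet x := by
  ext m
  exact ⟨fun hm => ⟨hm.1, (le_sInf_MSet x).trans hm.2⟩, fun hm => ⟨hm.1, sInf_le hm⟩⟩

theorem IsZ.sInf_MSet_le {x : L} (hx : IsZ x) : sInf (MSet x) ≤ x :=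
  hx _ x (MSet_sInf_MSet x).ge le_rfl

theorem isZ_sInf_MSet (c : L) : IsZ (sInf (MSet c)) := by
  intro a b hab hbc
  refine le_sInf fun m hm => (hab ?_).2
  exact ⟨hm.1, hbc.trans (sInf_le hm)⟩

theorem stmt6_general (x : L) : IsZ x ↔ x = sInf (MSet x) :=
  ⟨fun hx => (le_sInf_MSet x).antisymm hx.sInf_MSet_le,
    fun hx => hx ▸ isZ_sInf_MSet x⟩

theorem stmt6 (h : OneCompact L) (x : L) : IsZ x ↔ x = sInf (MSet x) :=
  stmt6_general x
end

section
/- The Jacobson radical j_L = ⋀{m : m maximal} of a multiplicative lattice with 1 compact is a z-element; in particular, if j_L = 0, then 0 is a z-element. -/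
variable {L : Type*} [MultiplicativeLattice L]

theorem isZ_sInf_of_forall_isMaxElt {S : Set L} (hS : ∀ m ∈ S, IsMaxElt m) : IsZ (sInf S) :=
  fun _ _ hsub hb => le_sInf fun m hm => (hsub ⟨hS m hm, hb.trans (sInf_le hm)⟩).2

theorem stmt8_general :
    IsZ (sInf {m : L | IsMaxElt m}) ∧
      (sInf {m : L | IsMaxElt m} = ⊥ → IsZ (⊥ : L)) := by
  have hz : IsZ (sInf {m : L | IsMaxElt m}) := isZ_sInf_of_forall_isMaxElt fun _ hm => hm
  exact ⟨hz, fun h0 => h0 ▸ hz⟩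

theorem stmt8 (h : OneCompact L) :
    IsZ (sInf {m : L | IsMaxElt m}) ∧
      (sInf {m : L | IsMaxElt m} = ⊥ → IsZ (⊥ : L)) :=
  stmt8_general
end

section
/- In a multiplicative lattice L with 1 compact, if a is a z-element and b is any element, then the residual (a : b) = ⋁{l ∈ L : lb ≤ a} is a z-element. -/
variable {L : Type*} [MultiplicativeLattice L]

/-!
Maximal elements are prime, so `M_d ⊆ M_c` gives `M_{db} ⊆ M_{cb}`. If `d ≤ (a : b)` then
`db ≤ a`, hence `cb ≤ a` because `a` is a z-element, i.e. `c ≤ (a : b)`.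
-/

namespace MultiplicativeLattice

lemma mul_sup (a x y : L) : a * (x ⊔ y) = a * x ⊔ a * y := by
  rw [← sSup_pair, mul_sSup, iSup_pair]

lemma mul_le_mul_of_le_right (a : L) {x y : L} (h : x ≤ y) : a * x ≤ a * y := by
  calc a * x ≤ a * x ⊔ a * y := le_sup_left
    _ = a * y := by rw [← mul_sup, sup_eq_right.mpr h]

lemma mul_le_left (a b : L) : a * b ≤ a := by
  simpa [← one_eq_top] using mul_le_mul_of_le_right a (le_top : b ≤ ⊤)

lemma mul_le_right (a b : L) : a * b ≤ b :=
  mul_comm a b ▸ mul_le_left b a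

lemma mul_le_of_le_sSup_setOf_mul_le {a b l : L} (hl : l ≤ sSup {l | l * b ≤ a}) :
    l * b ≤ a := by
  have hsSup : sSup {l | l * b ≤ a} * b ≤ a := by
    rw [mul_comm, mul_sSup]
    exact iSup₂_le fun l hl => mul_comm b l ▸ hl
  calc l * b = b * l := mul_comm l b
    _ ≤ b * sSup {l | l * b ≤ a} := mul_le_mul_of_le_right b hl
    _ ≤ a := mul_comm b _ ▸ hsSup

end MultiplicativeLattice

open MultiplicativeLattice

lemma IsMaxElt.sup_eq_top {m x : L} (hm : IsMaxElt m) (hx : ¬x ≤ m) : m ⊔ x = ⊤ := by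
  by_contra hne
  exact hx (hm.2 (m ⊔ x) le_sup_left hne ▸ le_sup_right)

lemma IsMaxElt.le_or_le_of_mul_le {m x y : L} (hm : IsMaxElt m) (hxy : x * y ≤ m) :
    x ≤ m ∨ y ≤ m := by
  by_contra! hc
  obtain ⟨hx, hy⟩ := hc
  refine hm.1 (top_le_iff.mp ?_)
  -- `⊤ = (m ⊔ x)(m ⊔ y)` expands into products each of which lies below `m`.
  calc ⊤ = (m ⊔ x) * (m ⊔ y) := by
        rw [hm.sup_eq_top hx, hm.sup_eq_top hy, ← one_eq_top, mul_one]
    _ = (m ⊔ x) * m ⊔ (m * y ⊔ x * y) := by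
        rw [MultiplicativeLattice.mul_sup, mul_comm _ y, MultiplicativeLattice.mul_sup,
          mul_comm y, mul_comm y]
    _ ≤ m := sup_le (mul_le_right _ m) (sup_le (mul_le_left m y) hxy)

lemma MSet_mul_subset_MSet_mul {c d : L} (b : L) (h : MSet d ⊆ MSet c) :
    MSet (d * b) ⊆ MSet (c * b) := by
  rintro m ⟨hm, hdb⟩
  refine ⟨hm, ?_⟩
  rcases hm.le_or_le_of_mul_le hdb with hd | hb
  · exact (mul_le_left c b).trans (h ⟨hm, hd⟩).2
  · exact (mul_le_right c b).trans hb

theorem stmt9_general (a : L) (ha : IsZ a) (b : L) :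
    IsZ (sSup {l : L | l * b ≤ a}) := by
  intro c d hdc hd
  exact le_sSup (ha (c * b) (d * b) (MSet_mul_subset_MSet_mul b hdc)
    (mul_le_of_le_sSup_setOf_mul_le hd))

theorem stmt9 (h : OneCompact L) (a : L) (ha : IsZ a) (b : L) :
    IsZ (sSup {l : L | l * b ≤ a}) :=
  stmt9_general a ha b
end

section
/- Let L be a multiplicative lattice with 1 compact in which every z-element is z-strongly irreducible. Then the set of z-elements of L is totally ordered by ≤. -/
variable {L : Type*} [MultiplicativeLattice L]

theorem IsZ.inf {a b : L} (ha : IsZ a) (hb : IsZ b) : IsZ (a ⊓ b) := fun c d hcd hd =>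
  le_inf (ha c d hcd (hd.trans inf_le_left)) (hb c d hcd (hd.trans inf_le_right))

theorem stmt19_general
    (hsi : ∀ s : L, IsZ s → ∀ a b : L, IsZ a → IsZ b → a ⊓ b ≤ s → a ≤ s ∨ b ≤ s) :
    ∀ a b : L, IsZ a → IsZ b → a ≤ b ∨ b ≤ a := fun a b ha hb =>
  (hsi (a ⊓ b) (ha.inf hb) a b ha hb le_rfl).imp
    (fun h => h.trans inf_le_right) (fun h => h.trans inf_le_left)

theorem stmt19 (h : OneCompact L)
    (hsi : ∀ s : L, IsZ s → ∀ a b : L, IsZ a → IsZ b → a ⊓ b ≤ s → a ≤ s ∨ b ≤ s) :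
    ∀ a b : L, IsZ a → IsZ b → a ≤ b ∨ b ≤ a :=
  stmt19_general hsi
end
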